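/- arXiv:1903.04609 — 2 statements merged into one kernel-verified Lean document; each statement's English description precedes it below -/
import Mathlib

section
/- Let y be an ordinal with ω^y = y (an ε-number) presented as y = sup_{n<ω} y_n for a strictly increasing sequence {y_n} with y_0 < y_1 - y_0 and y_{n+1} - y_n ≤ y_{n+2} - y_{n+1} for all n. Then there exists a normal function ψ on ordinals whose least fixed point is exactly y. -/
namespace Stmt17Aux

open Ordinal

/-- Partial sums `P n = (δ₀+1) + (δ₁+1) + ⋯ + (δ_{n-1}+1)` where `δ k = s (k+1) - s k`. -/
noncomputable def P (s : ℕ → Ordinal) : ℕ → Ordinal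
  | 0 => 0
  | n + 1 => P s n + (s (n + 1) - s n) + 1

open scoped Classical in
/-- The index of the block containing `x`. -/
noncomputable def idx (s : ℕ → Ordinal) (x : Ordinal) (hex : ∃ n, x < P s (n + 1)) : ℕ :=
  Nat.find hex

open scoped Classical in
/-- The normal function. -/
noncomputable def psi (s : ℕ → Ordinal) (x : Ordinal) : Ordinal :=
  if hx : ∃ n, x < P s (n + 1) then
    (s (idx s x hx + 1) + (idx s x hx : Ordinal)) + (x - P s (idx s x hx))
  else x

theorem idx_spec (s : ℕ → Ordinal) (x : Ordinal) (hex : ∃ n, x < P s (n + 1)) :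
    P s (idx s x hex) ≤ x ∧ x < P s (idx s x hex + 1) := by
  classical
  refine ⟨?_, Nat.find_spec hex⟩
  rcases h : idx s x hex with _ | k
  · rw [show P s 0 = 0 from rfl]
    exact zero_le
  · have hk : k < idx s x hex := by omega
    have := Nat.find_min hex hk
    exact le_of_not_gt this

theorem psi_pos (s : ℕ → Ordinal) (x : Ordinal) (hex : ∃ n, x < P s (n + 1)) :
    psi s x = (s (idx s x hex + 1) + (idx s x hex : Ordinal)) + (x - P s (idx s x hex)) := by
  rw [psi, dif_pos hex]

theorem psi_neg (s : ℕ → Ordinal) (x : Ordinal) (hex : ¬∃ n, x < P s (n + 1)) :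
    psi s x = x := by
  rw [psi, dif_neg hex]

theorem natCast_add_le (n : ℕ) (a : Ordinal) : (n : Ordinal) + a ≤ a + n := by
  induction n with
  | zero => simp
  | succ k ih =>
    have h1 : (1 : Ordinal) + a ≤ a + 1 := by
      rcases lt_or_ge a ω with h | h
      · obtain ⟨m, rfl⟩ := Ordinal.lt_omega0.1 h
        rw [← Nat.cast_one, ← Nat.cast_add, ← Nat.cast_add, Nat.add_comm]
      · rw [Ordinal.one_add_of_omega0_le h]
        exact le_self_add
    calc ((k + 1 : ℕ) : Ordinal) + a = (k : Ordinal) + (1 + a) := by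
          push_cast; rw [add_assoc]
      _ ≤ (k : Ordinal) + (a + 1) := add_le_add_right h1 _
      _ = ((k : Ordinal) + a) + 1 := by rw [add_assoc]
      _ ≤ (a + (k : Ordinal)) + 1 := add_le_add_left ih 1
      _ = a + ((k + 1 : ℕ) : Ordinal) := by push_cast; rw [add_assoc]

theorem lt_add_left_of_lt_mul_omega0 {d v : Ordinal} (h : v < d * ω) : v < d + v := by
  by_contra hc
  push_neg at hc
  have heq : d + v = v := le_antisymm hc le_add_self
  have hk : ∀ k : ℕ, d * k + v = v := by
    intro k
    induction k with
    | zero => simp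
    | succ m ih =>
      have : d * (m + 1 : ℕ) + v = d * m + (d + v) := by
        push_cast
        rw [mul_add, mul_one, add_assoc]
      rw [this, heq, ih]
    
  have : d * ω ≤ v := by
    rw [Ordinal.mul_le_iff_of_isSuccLimit Ordinal.isSuccLimit_omega0]
    intro b hb
    obtain ⟨k, rfl⟩ := Ordinal.lt_omega0.1 hb
    calc d * k ≤ d * k + v := le_self_add
      _ = v := hk k
  exact absurd (this.trans_lt h) (lt_irrefl _)

end Stmt17Aux

open Ordinal in
/-- If an ε-number `y` is presented as the supremum of a strictly increasing
`ω`-sequence whose first term is below the first difference and whose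
difference sequence is non-decreasing, then there is a normal function whose
least fixed point is exactly `y`. -/
theorem stmt_17 (y : Ordinal) (hy : ω ^ y = y)
    (s : ℕ → Ordinal) (hmono : StrictMono s)
    (hsup : y = ⨆ n : ℕ, s n)
    (h0 : s 0 < s 1 - s 0)
    (hdiff : ∀ n : ℕ, s (n + 1) - s n ≤ s (n + 2) - s (n + 1)) :
    ∃ ψ : Ordinal → Ordinal, Order.IsNormal ψ ∧
      IsLeast {x | ψ x = x} y := by
  classical
  set δ : ℕ → Ordinal := fun n => s (n + 1) - s n with hδdef
  have hsle : ∀ n, s n ≤ s (n + 1) := fun n => (hmono (Nat.lt_succ_self n)).le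
  have hsδ : ∀ n, s n + δ n = s (n + 1) := fun n => Ordinal.add_sub_cancel_of_le (hsle n)
  have hδpos : ∀ n, 0 < δ n := by
    intro n
    rw [hδdef]
    exact Ordinal.lt_sub.2 (by rw [add_zero]; exact hmono (Nat.lt_succ_self n))
  have hδmono : Monotone δ := monotone_nat_of_le_succ hdiff
  -- y is additively principal
  have hyprin : ∀ a < y, ∀ b < y, a + b < y := by
    have := Ordinal.principal_add_omega0_opow y
    rw [hy] at this
    exact fun a ha b hb => this ha hb
  have hypos : 0 < y := by
    rw [← hy]; exact Ordinal.opow_pos _ Ordinal.omega0_pos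
  have hωy : ω ≤ y := by
    calc ω = ω ^ (1 : Ordinal) := (Ordinal.opow_one ω).symm
      _ ≤ ω ^ y := Ordinal.opow_le_opow_right Ordinal.omega0_pos (Order.one_le_iff_pos.2 hypos)
      _ = y := hy
  have hnaty : ∀ n : ℕ, (n : Ordinal) < y := fun n => (Ordinal.nat_lt_omega0 n).trans_le hωy
  have h1y : (1 : Ordinal) < y := by simpa using hnaty 1
  have hsy : ∀ n, s n < y := by
    intro n
    have h1 : s (n + 1) ≤ y := by
      rw [hsup]
      exact le_ciSup (Ordinal.bddAbove_range s) (n + 1)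
    exact (hmono (Nat.lt_succ_self n)).trans_le h1
  have hδy : ∀ n, δ n < y := fun n => (Ordinal.sub_le_self _ _).trans_lt (hsy (n + 1))
  -- facts about P
  set Q : ℕ → Ordinal := Stmt17Aux.P s with hQdef
  have hQ0 : Q 0 = 0 := rfl
  have hQsucc : ∀ n, Q (n + 1) = Q n + δ n + 1 := fun n => rfl
  have hQy : ∀ n, Q n < y := by
    intro n
    induction n with
    | zero => rw [hQ0]; exact hypos
    | succ k ih =>
      rw [hQsucc]
      exact hyprin _ (hyprin _ ih _ (hδy k)) _ h1y
  have hQmono : StrictMono Q := by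
    apply strictMono_nat_of_lt_succ
    intro n
    rw [hQsucc, add_assoc]
    conv_lhs => rw [← add_zero (Q n)]
    exact add_lt_add_right (lt_of_lt_of_le (hδpos n) le_self_add) _
  have hQle : ∀ n, Q n ≤ s n + n := by
    intro n
    induction n with
    | zero => exact zero_le
    | succ k ih =>
      rw [hQsucc]
      calc Q k + δ k + 1 ≤ s k + (k : Ordinal) + δ k + 1 := by
            exact add_le_add_left (add_le_add_left ih _) _
        _ = s k + ((k : Ordinal) + δ k) + 1 := by rw [add_assoc (s k)]
        _ ≤ s k + (δ k + (k : Ordinal)) + 1 := by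
            exact add_le_add_left (add_le_add_right (Stmt17Aux.natCast_add_le k _) _) _
        _ = s (k + 1) + ((k + 1 : ℕ) : Ordinal) := by
            rw [← hsδ k]; push_cast; simp only [add_assoc]
  -- x < y iff x is in some block
  have hsQ : ∀ n, s n ≤ s 0 + Q n := by
    intro n
    induction n with
    | zero => rw [hQ0, add_zero]
    | succ k ih =>
      calc s (k + 1) = s k + δ k := (hsδ k).symm
        _ ≤ (s 0 + Q k) + δ k := add_le_add_left ih _
        _ = s 0 + (Q k + δ k) := by rw [add_assoc]
        _ ≤ s 0 + (Q k + δ k + 1) := add_le_add_right le_self_add _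
        _ = s 0 + Q (k + 1) := by rw [hQsucc]
  have hex_of_lt : ∀ {x}, x < y → ∃ n, x < Q (n + 1) := by
    intro x hx
    by_contra h
    push_neg at h
    have hle : ∀ n, s n ≤ s 0 + x := by
      intro n
      cases n with
      | zero => exact le_self_add
      | succ k => exact (hsQ (k + 1)).trans (add_le_add_right (h k) _)
    have hya : y ≤ s 0 + x := by
      rw [hsup]
      exact ciSup_le hle
    exact absurd (hya.trans_lt (hyprin _ (hsy 0) _ hx)) (lt_irrefl y)
  have hnex_of_ge : ∀ {x}, y ≤ x → ¬∃ n, x < Q (n + 1) := by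
    rintro x hx ⟨n, hn⟩
    exact absurd ((hQy (n + 1)).trans_le hx) (not_lt.2 hn.le)
  -- key value bound lemmas
  set c : ℕ → Ordinal := fun n => s (n + 1) + (n : Ordinal) with hcdef
  have hcy : ∀ n, c n < y := fun n => hyprin _ (hsy (n + 1)) _ (hnaty n)
  -- block values separation
  have hblock : ∀ n, ∀ u ≤ δ n, c n + u < c (n + 1) := by
    intro n u hu
    have h1 : c (n + 1) = s (n + 1) + (δ (n + 1) + ((n : Ordinal) + 1)) := by
      rw [hcdef]
      show s (n + 2) + ((n + 1 : ℕ) : Ordinal) = _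
      rw [← hsδ (n + 1)]
      push_cast
      simp only [add_assoc]
    rw [h1, hcdef]
    show s (n + 1) + (n : Ordinal) + u < _
    rw [add_assoc]
    apply add_lt_add_right
    calc (n : Ordinal) + u ≤ (n : Ordinal) + δ n := add_le_add_right hu _
      _ ≤ (n : Ordinal) + δ (n + 1) := add_le_add_right (hδmono (Nat.le_succ n)) _
      _ ≤ δ (n + 1) + (n : Ordinal) := Stmt17Aux.natCast_add_le n _
      _ < δ (n + 1) + ((n : Ordinal) + 1) := by
          apply add_lt_add_right
          exact lt_add_of_pos_right _ (by norm_num : (0:Ordinal) < 1)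
  have hcmono : Monotone c := by
    apply monotone_nat_of_le_succ
    intro n
    exact le_of_lt (lt_of_le_of_lt (le_self_add : c n ≤ c n + 0) (by simpa using hblock n 0 zero_le))
  -- value description for x < y
  have hval : ∀ (x : Ordinal) (hex : ∃ n, x < Q (n + 1)),
      Stmt17Aux.psi s x = c (Stmt17Aux.idx s x hex) + (x - Q (Stmt17Aux.idx s x hex)) :=
    fun x hex => Stmt17Aux.psi_pos s x hex
  have hu_le : ∀ (x : Ordinal) (hex : ∃ n, x < Q (n + 1)),
      x - Q (Stmt17Aux.idx s x hex) ≤ δ (Stmt17Aux.idx s x hex) := by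
    intro x hex
    have h2 := (Stmt17Aux.idx_spec s x hex).2
    rw [← hQdef, hQsucc] at h2
    have : x ≤ Q (Stmt17Aux.idx s x hex) + δ (Stmt17Aux.idx s x hex) :=
      Order.le_of_lt_add_one h2
    exact Ordinal.sub_le.2 this
  have hx_eq : ∀ (x : Ordinal) (hex : ∃ n, x < Q (n + 1)),
      Q (Stmt17Aux.idx s x hex) + (x - Q (Stmt17Aux.idx s x hex)) = x :=
    fun x hex => Ordinal.add_sub_cancel_of_le (Stmt17Aux.idx_spec s x hex).1
  -- idx uniqueness
  have hidx_eq : ∀ (x : Ordinal) (hex : ∃ n, x < Q (n + 1)) (n : ℕ),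
      Q n ≤ x → x < Q (n + 1) → Stmt17Aux.idx s x hex = n := by
    intro x hex n h1 h2
    have hs1 := (Stmt17Aux.idx_spec s x hex).1
    have hs2 := (Stmt17Aux.idx_spec s x hex).2
    by_contra hne
    rcases Nat.lt_or_ge (Stmt17Aux.idx s x hex) n with hlt | hge
    · have : Q (Stmt17Aux.idx s x hex + 1) ≤ Q n := hQmono.monotone (by omega)
      exact absurd (hs2.trans_le (this.trans h1)) (lt_irrefl x)
    · have hgt : n < Stmt17Aux.idx s x hex := by omega
      have : Q (n + 1) ≤ Q (Stmt17Aux.idx s x hex) := hQmono.monotone (by omega)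
      exact absurd (h2.trans_le (this.trans hs1)) (lt_irrefl x)
  -- psi x > x for x < y
  have hgt : ∀ (x : Ordinal) (hex : ∃ n, x < Q (n + 1)), x < Stmt17Aux.psi s x := by
    intro x hex
    set n := Stmt17Aux.idx s x hex with hn
    set u := x - Q n with hu
    have hxe : Q n + u = x := hx_eq x hex
    have hule : u ≤ δ n := hu_le x hex
    rw [hval x hex, ← hn, ← hu]
    calc x = Q n + u := hxe.symm
      _ ≤ (s n + (n : Ordinal)) + u := add_le_add_left (hQle n) _
      _ = s n + ((n : Ordinal) + u) := by rw [add_assoc]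
      _ < s n + (δ n + ((n : Ordinal) + u)) := by
          apply add_lt_add_right
          apply Stmt17Aux.lt_add_left_of_lt_mul_omega0
          calc (n : Ordinal) + u ≤ (n : Ordinal) + δ n := add_le_add_right hule _
            _ ≤ δ n * n + δ n := by
                apply add_le_add_left
                calc (n : Ordinal) = 1 * n := (one_mul _).symm
                  _ ≤ δ n * n := mul_le_mul_left (Order.one_le_iff_pos.2 (hδpos n)) _
            _ = δ n * ((n : Ordinal) + 1) := by rw [mul_add, mul_one]
            _ < δ n * ω := by
                apply mul_lt_mul_of_pos_left _ (hδpos n)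
                have : ((n + 1 : ℕ) : Ordinal) < ω := Ordinal.nat_lt_omega0 (n + 1)
                push_cast at this
                exact this
      _ = (s n + δ n) + ((n : Ordinal) + u) := by rw [add_assoc]
      _ = s (n + 1) + ((n : Ordinal) + u) := by rw [hsδ n]
      _ = c n + u := by rw [hcdef]; show _ = s (n+1) + (n:Ordinal) + u; rw [add_assoc]
  -- psi x < y for x < y
  have hlty : ∀ (x : Ordinal) (hex : ∃ n, x < Q (n + 1)), Stmt17Aux.psi s x < y := by
    intro x hex
    rw [hval x hex]
    apply hyprin _ (hcy _)
    exact lt_of_le_of_lt (hu_le x hex) (hδy _)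
  -- strict monotonicity
  have hstrict : StrictMono (Stmt17Aux.psi s) := by
    intro x x' hxx'
    by_cases hx : ∃ n, x < Q (n + 1)
    · by_cases hx' : ∃ n, x' < Q (n + 1)
      · set n := Stmt17Aux.idx s x hx with hn
        set n' := Stmt17Aux.idx s x' hx' with hn'
        have hnn' : n ≤ n' := by
          by_contra hcon
          push_neg at hcon
          have h1 : Q (n' + 1) ≤ Q n := hQmono.monotone (by omega)
          have h2 : Q n ≤ x := (Stmt17Aux.idx_spec s x hx).1
          have h3 : x' < Q (n' + 1) := (Stmt17Aux.idx_spec s x' hx').2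
          exact absurd (h3.trans_le (h1.trans (h2.trans hxx'.le))) (lt_irrefl x')
        rw [hval x hx, hval x' hx', ← hn, ← hn']
        rcases eq_or_lt_of_le hnn' with heq | hlt
        · rw [← heq]
          apply add_lt_add_right
          have h1 : Q n + (x - Q n) = x := hx_eq x hx
          have h2 : Q n + (x' - Q n) = x' :=
            Ordinal.add_sub_cancel_of_le ((Stmt17Aux.idx_spec s x hx).1.trans hxx'.le)
          refine lt_of_add_lt_add_left (a := Q n) ?_
          rw [h1, h2]
          exact hxx'
        · calc c n + (x - Q n) < c (n + 1) := hblock n _ (hu_le x hx)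
            _ ≤ c n' := hcmono hlt
            _ ≤ c n' + (x' - Q n') := le_self_add
      · rw [Stmt17Aux.psi_neg s x' hx']
        have hx'y : y ≤ x' := by
          by_contra hcon
          push_neg at hcon
          exact hx' (hex_of_lt hcon)
        exact (hlty x hx).trans_le hx'y
    · have hxy : y ≤ x := by
        by_contra hcon
        push_neg at hcon
        exact hx (hex_of_lt hcon)
      have hx' : ¬∃ n, x' < Q (n + 1) := hnex_of_ge (hxy.trans hxx'.le)
      rw [Stmt17Aux.psi_neg s x hx, Stmt17Aux.psi_neg s x' hx']
      exact hxx'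
  -- continuity at limits
  have hlim : ∀ o, Order.IsSuccLimit o → ∀ a, (∀ b < o, Stmt17Aux.psi s b ≤ a) →
      Stmt17Aux.psi s o ≤ a := by
    intro o ho a H
    by_cases hex : ∃ n, o < Q (n + 1)
    · set n := Stmt17Aux.idx s o hex with hn
      set u := o - Q n with hu
      have hoe : Q n + u = o := hx_eq o hex
      have hulim : Order.IsSuccLimit u := by
        rcases Ordinal.zero_or_succ_or_isSuccLimit u with h0' | ⟨v, hv⟩ | hl
        · exfalso
          rw [h0', add_zero] at hoe
          rcases Nat.eq_zero_or_pos n with hn0 | hnpos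
          · have ho0 : o = 0 := by rw [← hoe, hn0, hQ0]
            exact ho.pos.ne' ho0
          · obtain ⟨k, hk⟩ := Nat.exists_eq_succ_of_ne_zero hnpos.ne'
            have hsucc : o = Q k + δ k + 1 := by rw [← hoe, hk, hQsucc]
            rw [Ordinal.add_one_eq_succ] at hsucc
            exact Order.not_isSuccLimit_succ _ (hsucc ▸ ho)
        · exfalso
          have hsucc : o = Order.succ (Q n + v) := by rw [← hoe, ← hv, Ordinal.add_succ]
          exact Order.not_isSuccLimit_succ _ (hsucc ▸ ho)
        · exact hl
      rw [hval o hex, ← hn, ← hu]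
      rw [(Ordinal.isNormal_add_right (c n)).le_iff_forall_le hulim]
      intro w hw
      set b := Q n + w with hb
      have hbo : b < o := by
        rw [← hoe]
        exact add_lt_add_right hw _
      have hexb : ∃ m, b < Q (m + 1) := ⟨n, hbo.trans (Stmt17Aux.idx_spec s o hex).2⟩
      have hidxb : Stmt17Aux.idx s b hexb = n :=
        hidx_eq b hexb n le_self_add (hbo.trans (Stmt17Aux.idx_spec s o hex).2)
      have hvb := hval b hexb
      rw [hidxb] at hvb
      have : b - Q n = w := by rw [hb, Ordinal.add_sub_cancel]
      rw [this] at hvb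
      calc c n + w = Stmt17Aux.psi s b := hvb.symm
        _ ≤ a := H b hbo
    · rw [Stmt17Aux.psi_neg s o hex]
      have hoy : y ≤ o := by
        by_contra hcon
        push_neg at hcon
        exact hex (hex_of_lt hcon)
      rw [ho.le_iff_forall_le]
      intro b hbo
      by_cases hbex : ∃ n, b < Q (n + 1)
      · exact ((hgt b hbex).trans_le (H b hbo)).le
      · have := Stmt17Aux.psi_neg s b hbex
        rw [← this]
        exact H b hbo
  refine ⟨Stmt17Aux.psi s, Order.isNormal_iff.2 ⟨hstrict, hlim⟩, ?_, ?_⟩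
  · show Stmt17Aux.psi s y = y
    exact Stmt17Aux.psi_neg s y (hnex_of_ge le_rfl)
  · intro x hx
    show y ≤ x
    by_contra hcon
    push_neg at hcon
    have hex := hex_of_lt hcon
    exact absurd hx.symm (ne_of_lt (hgt x hex))
end

section
/- The ordinal ε₀ + ω admits no strictly increasing sequence {y_n}_{n<ω} with supremum ε₀ + ω satisfying both y_0 < y_1 - y_0 and y_{n+1} - y_n ≤ y_{n+2} - y_{n+1} for all n ≥ 0. -/
open Ordinal in
/-- The least ε-number, i.e. the least ordinal `x` with `ω^x = x`. -/
noncomputable def epsilon0 : Ordinal := sInf {x : Ordinal | ω ^ x = x}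

open Ordinal

/-- The ordinal `ε₀ + ω` admits no strictly increasing `ω`-sequence with
supremum `ε₀ + ω` whose first term is below the first difference and whose
difference sequence is non-decreasing. -/
theorem stmt_19 :
    ¬ ∃ s : ℕ → Ordinal, StrictMono s ∧
      (⨆ n : ℕ, s n) = epsilon0 + Ordinal.omega0 ∧
      s 0 < s 1 - s 0 ∧
      ∀ n : ℕ, s (n + 1) - s n ≤ s (n + 2) - s (n + 1) := by
  rintro ⟨s, hmono, hsup, h0, hd⟩
  set e := epsilon0 with he
  have hS : Set.Nonempty {x : Ordinal | ω ^ x = x} :=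
    ⟨nfp (ω ^ ·) 0, Ordinal.nfp_fp (isNormal_opow one_lt_omega0) 0⟩
  have hfix : ω ^ e = e := csInf_mem hS
  have he0 : e ≠ 0 := by
    intro h
    rw [h, opow_zero] at hfix
    exact one_ne_zero hfix
  have homega : ω ≤ e := by
    calc ω = ω ^ (1 : Ordinal) := (opow_one ω).symm
    _ ≤ ω ^ e := opow_le_opow_right omega0_pos (Ordinal.one_le_iff_ne_zero.2 he0)
    _ = e := hfix
  have hprin : ∀ a b : Ordinal, a < e → b < e → a + b < e := by
    intro a b ha hb
    rw [← hfix] at ha hb ⊢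
    exact principal_add_omega0_opow _ ha hb
  have hub : ∀ n, s n < e + ω := by
    intro n
    calc s n < s (n + 1) := hmono (Nat.lt_succ_self n)
    _ ≤ ⨆ n : ℕ, s n := le_ciSup (Ordinal.bddAbove_range _) (n + 1)
    _ = e + ω := hsup
  -- small differences above e
  have hsmall : ∀ n, e ≤ s n → s (n + 1) - s n < ω := by
    intro n hn
    have h1 : s n ≤ s (n + 1) := (hmono (Nat.lt_succ_self n)).le
    have h2 : s n + (s (n + 1) - s n) = s (n + 1) := Ordinal.add_sub_cancel_of_le h1
    have h3 : s n + (s (n + 1) - s n) < s n + ω := by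
      rw [h2]
      exact lt_of_lt_of_le (hub (n + 1)) (add_le_add_left hn ω)
    exact lt_of_add_lt_add_left h3
  have hexists : ∃ n, e ≤ s n := by
    by_contra hc
    push_neg at hc
    have h1 : (⨆ n : ℕ, s n) ≤ e := ciSup_le fun n => (hc n).le
    rw [hsup] at h1
    have h2 : e < e + ω := by
      conv_lhs => rw [← add_zero e]
      exact (add_lt_add_iff_left e).2 omega0_pos
    exact absurd h1 (not_le.2 h2)
  let N := Nat.find hexists
  have hN : e ≤ s N := Nat.find_spec hexists
  rcases Nat.eq_zero_or_eq_succ_pred N with hz | hsucc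
  · -- first term already ≥ e
    have hN0 : e ≤ s 0 := hz ▸ hN
    have : s 1 - s 0 < ω := hsmall 0 hN0
    exact absurd h0 (not_lt.2 ((this.le.trans homega).trans hN0))
  · set m := N - 1 with hm
    have hNm : N = m + 1 := hsucc
    have hsm : ¬ e ≤ s m := Nat.find_min hexists (by omega)
    push_neg at hsm
    have hNe : e ≤ s (m + 1) := hNm ▸ hN
    -- the crossing difference is ≥ e
    have hbig : e ≤ s (m + 1) - s m := by
      by_contra hc
      push_neg at hc
      have h1 : s m + (s (m + 1) - s m) = s (m + 1) :=
        Ordinal.add_sub_cancel_of_le (hmono (Nat.lt_succ_self m)).le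
      have h2 : s (m + 1) < e := h1 ▸ hprin _ _ hsm hc
      exact absurd hNe (not_le.2 h2)
    have h3 : e ≤ s (m + 2) - s (m + 1) := hbig.trans (hd m)
    have h4 : s (m + 2) - s (m + 1) < ω := hsmall (m + 1) hNe
    exact absurd h3 (not_le.2 (h4.trans_le homega))
end
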